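/- arXiv:1704.07573 — 8 statements merged into one kernel-verified Lean document; each statement's English description precedes it below -/
import Mathlib

section
/- Let T be a thinning matrix such that T_{n,n} > 0 and T_{n,n-1} > 0 for all n ≥ 1, let ν be a probability distribution on ℕ whose support is an initial segment (if ν_m = 0 for some m then ν_n = 0 for all n ≥ m), and let Q be a condensation matrix for (ν, T). Then for every function g : ℕ → ℝ with g ≥ 0 the integration-by-parts formula holds: ∑_{n ≥ 1} g(n) · (T_{n,n-1} / T_{n-1,n-1}) · ν_n = ∑_{n ≥ 0} g(n+1) · (Q_{n,n+1} / Q_{n,n}) · ν_n. -/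
/-!
The identity holds term by term. If `ν n ≠ 0`, the balance equation gives
`ν' n * Q n n = ν n * T n n ≠ 0`, so `ν' n ≠ 0` cancels from
`Q n (n+1) / Q n n = (ν' n * Q n (n+1)) / (ν' n * Q n n) = ν (n+1) * T (n+1) n / (ν n * T n n)`.
If `ν n = 0`, then `ν (n+1) = 0` as the support is an initial segment, and both terms vanish.
-/

theorem div_eq_div_of_balance {ι κ K : Type*} [Field K] {ν : ι → K} {ν' : κ → K}
    {T : ι → κ → K} {Q : κ → ι → K} (hbal : ∀ k n, ν' k * Q k n = ν n * T n k)
    {k : κ} {m : ι} (n : ι) (hm : ν m * T m k ≠ 0) :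
    Q k n / Q k m = ν n * T n k / (ν m * T m k) := by
  have hν' : ν' k ≠ 0 := left_ne_zero_of_mul (hbal k m ▸ hm)
  rw [← hbal k n, ← hbal k m, mul_div_mul_left _ _ hν']

theorem stmt1_general
    (T : ℕ → ℕ → ℝ)
    (hTdiag : ∀ n : ℕ, 0 < T n n)
    (ν : ℕ → ℝ)
    (hsupp : ∀ m n : ℕ, ν m = 0 → m ≤ n → ν n = 0)
    (ν' : ℕ → ℝ)
    (Q : ℕ → ℕ → ℝ)
    (hbal : ∀ k n, ν' k * Q k n = ν n * T n k)
    (g : ℕ → ℝ) :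
    ∑' n : ℕ, g (n + 1) * (T (n + 1) n / T n n) * ν (n + 1)
      = ∑' n : ℕ, g (n + 1) * (Q n (n + 1) / Q n n) * ν n := by
  refine tsum_congr fun n => ?_
  by_cases hνn : ν n = 0
  · simp [hνn, hsupp n (n + 1) hνn n.le_succ]
  · have hTn : T n n ≠ 0 := (hTdiag n).ne'
    rw [div_eq_div_of_balance hbal (n + 1) (mul_ne_zero hνn hTn)]
    field_simp

/-- Integration-by-parts formula: if `T` is a thinning matrix with positive
diagonal and subdiagonal entries, `ν` a probability distribution on `ℕ` whose support is an
initial segment, and `Q` a condensation matrix for `(ν, T)`, then for every nonnegative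
`g : ℕ → ℝ`,
`∑_{n ≥ 1} g n * (T n (n-1) / T (n-1) (n-1)) * ν n
  = ∑_{n ≥ 0} g (n+1) * (Q n (n+1) / Q n n) * ν n`. -/
theorem stmt1
    (T : ℕ → ℕ → ℝ)
    (hT0 : ∀ n k, 0 ≤ T n k) (hT1 : ∀ n, ∑' k, T n k = 1)
    (hTtri : ∀ n k, n < k → T n k = 0)
    (hTdiag : ∀ n : ℕ, 0 < T n n) (hTsub : ∀ n : ℕ, 1 ≤ n → 0 < T n (n - 1))
    (ν : ℕ → ℝ) (hν0 : ∀ n, 0 ≤ ν n) (hν1 : ∑' n, ν n = 1)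
    (hsupp : ∀ m n : ℕ, ν m = 0 → m ≤ n → ν n = 0)
    (ν' : ℕ → ℝ) (hν' : ∀ k, ν' k = ∑' n, ν n * T n k)
    (Q : ℕ → ℕ → ℝ)
    (hQ0 : ∀ k n, 0 ≤ Q k n) (hQ1 : ∀ k, ∑' n, Q k n = 1)
    (hbal : ∀ k n, ν' k * Q k n = ν n * T n k)
    (g : ℕ → ℝ) (hg : ∀ n, 0 ≤ g n) :
    ∑' n : ℕ, g (n + 1) * (T (n + 1) n / T n n) * ν (n + 1)
      = ∑' n : ℕ, g (n + 1) * (Q n (n + 1) / Q n n) * ν n :=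
  stmt1_general T hTdiag ν hsupp ν' Q hbal g
end

section
/- Let ν be a probability distribution on ℕ, T a thinning matrix, and Q a condensation matrix for (ν, T). Then for all n, k, i, j ∈ ℕ such that j ≥ n, i ≤ j, i ≤ n and ν'_i > 0 (where ν' = νT), the alternating cycle condition for the thinned distribution holds: Q_{i,j} · T_{j,k} · Q_{k,n} · T_{n,i} = Q_{i,n} · T_{n,k} · Q_{k,j} · T_{j,i}. -/
/-!
Multiplying either side of the cycle by `ν'_i ν'_k` and applying the balance equations turns it
into `ν_j T_{j,i} ν_n T_{n,k} T_{j,k} T_{n,i}`, so the two sides agree when `ν'_k ≠ 0`. When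
`ν'_k = 0` the balance equations force `ν_m T_{m,k} = 0` for every `m`, and both sides vanish
after multiplication by `ν'_i`.
-/

section DetailedBalance

variable {α R : Type*} [CommRing R] {ν ν' : α → R} {T Q : α → α → R}

theorem balance_mul_cycle_eq (hbal : ∀ k n, ν' k * Q k n = ν n * T n k) (n k i j : α) :
    ν' i * ν' k * (Q i j * T j k * Q k n * T n i) =
      ν' i * ν' k * (Q i n * T n k * Q k j * T j i) :=
  calc ν' i * ν' k * (Q i j * T j k * Q k n * T n i)
      = (ν' i * Q i j) * (ν' k * Q k n) * (T j k * T n i) := by ring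
    _ = (ν j * T j i) * (ν n * T n k) * (T j k * T n i) := by rw [hbal, hbal]
    _ = (ν n * T n i) * (ν j * T j k) * (T n k * T j i) := by ring
    _ = (ν' i * Q i n) * (ν' k * Q k j) * (T n k * T j i) := by rw [hbal, hbal]
    _ = ν' i * ν' k * (Q i n * T n k * Q k j * T j i) := by ring

theorem balance_mul_cycle_eq_zero (hbal : ∀ k n, ν' k * Q k n = ν n * T n k) {k : α}
    (hk : ν' k = 0) (n i j : α) : ν' i * (Q i j * T j k * Q k n * T n i) = 0 := by
  have hjk : ν j * T j k = 0 := by rw [← hbal, hk, zero_mul]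
  calc ν' i * (Q i j * T j k * Q k n * T n i)
      = (ν' i * Q i j) * T j k * Q k n * T n i := by ring
    _ = (ν j * T j k) * T j i * Q k n * T n i := by rw [hbal]; ring
    _ = 0 := by rw [hjk]; ring

theorem balance_alternating_cycle [IsDomain R] (hbal : ∀ k n, ν' k * Q k n = ν n * T n k)
    {i : α} (hi : ν' i ≠ 0) (n k j : α) :
    Q i j * T j k * Q k n * T n i = Q i n * T n k * Q k j * T j i := by
  rcases eq_or_ne (ν' k) 0 with hk | hk
  · exact mul_left_cancel₀ hi <|
      (balance_mul_cycle_eq_zero hbal hk n i j).trans (balance_mul_cycle_eq_zero hbal hk j i n).symm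
  · exact mul_left_cancel₀ (mul_ne_zero hi hk) (balance_mul_cycle_eq hbal n k i j)

end DetailedBalance

theorem stmt4_general
    (T : ℕ → ℕ → ℝ)
    (ν : ℕ → ℝ)
    (ν' : ℕ → ℝ)
    (Q : ℕ → ℕ → ℝ)
    (hbal : ∀ k n, ν' k * Q k n = ν n * T n k) :
    ∀ n k i j : ℕ, n ≤ j → i ≤ j → i ≤ n → 0 < ν' i →
      Q i j * T j k * Q k n * T n i = Q i n * T n k * Q k j * T j i :=
  fun n k _ j _ _ _ hi => balance_alternating_cycle hbal hi.ne' n k j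

/-- Alternating cycle condition for the thinned distribution `ν' = νT`:
if `Q` is a condensation matrix for `(ν, T)`, then for all `n k i j` with `j ≥ n`, `i ≤ j`,
`i ≤ n` and `ν' i > 0`,
`Q i j * T j k * Q k n * T n i = Q i n * T n k * Q k j * T j i`. -/
theorem stmt4
    (T : ℕ → ℕ → ℝ)
    (hT0 : ∀ n k, 0 ≤ T n k) (hT1 : ∀ n, ∑' k, T n k = 1)
    (hTtri : ∀ n k, n < k → T n k = 0)
    (ν : ℕ → ℝ) (hν0 : ∀ n, 0 ≤ ν n) (hν1 : ∑' n, ν n = 1)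
    (ν' : ℕ → ℝ) (hν' : ∀ k, ν' k = ∑' n, ν n * T n k)
    (Q : ℕ → ℕ → ℝ)
    (hQ0 : ∀ k n, 0 ≤ Q k n) (hQ1 : ∀ k, ∑' n, Q k n = 1)
    (hbal : ∀ k n, ν' k * Q k n = ν n * T n k) :
    ∀ n k i j : ℕ, n ≤ j → i ≤ j → i ≤ n → 0 < ν' i →
      Q i j * T j k * Q k n * T n i = Q i n * T n k * Q k j * T j i :=
  stmt4_general T ν ν' Q hbal
end

section
/- Let T be a positive thinning matrix (T_{n,k} > 0 for all k ≤ n) and Q an abstract condensation matrix with Q_{n,n} > 0 for all n, such that T and Q satisfy the alternating cycle condition T_{n,i} · Q_{i,j} · T_{j,k} · Q_{k,n} = T_{n,k} · Q_{k,j} · T_{j,i} · Q_{i,n} for all i, j, k, n ∈ ℕ. Define ν : ℕ → ℝ recursively by ν_0 = 1 and ν_n = ν_{n-1} · (T_{n-1,n-1} / T_{n,n-1}) · (Q_{n-1,n} / Q_{n-1,n-1}) for n ≥ 1, and let n₀ ∈ ℕ ∪ {∞} be the smallest index with Q_{n₀,n₀+1} = 0 (with n₀ = ∞ if no such index exists).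 Then ν_n > 0 for all n ≤ n₀, ν_n = 0 for all n > n₀, and ν satisfies the balance equations ν_n · T_{n,k} = ν'_k · Q_{k,n} for all n, k ≤ n₀, where ν'_k = ∑_j ν_j · T_{j,k}. -/
/-!
Write `c k = ν k T k k / Q k k`. The recursion for `ν` is the balance equation
`ν n T n k = c k Q k n` for `n = k + 1`, and the alternating cycle condition with `i = j`
propagates it to all `k ≤ n ≤ n₀`, as long as `ν` does not vanish. The same instance of the
cycle condition shows that a vanishing entry `Q n₀ (n₀ + 1)` forces `Q k m = 0` for all
`k ≤ n₀ < m`, matching `ν m = 0` there. Hence `ν j T j k = c k Q k j` for every `j` once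
`k ≤ n₀`, and summing over `j` with `∑ j, Q k j = 1` identifies `c k` with `ν' k`.
-/

def AlternatingCycle (T Q : ℕ → ℕ → ℝ) : Prop :=
  ∀ i j k n, T n i * Q i j * T j k * Q k n = T n k * Q k j * T j i * Q i n

theorem eq_tsum_mul_of_eq_const_mul {ι : Type*} {a q : ι → ℝ} {c : ℝ} (hq : ∑' j, q j = 1)
    (ha : ∀ j, a j = c * q j) (i : ι) : a i = (∑' j, a j) * q i := by
  rw [tsum_congr ha, tsum_mul_left, hq, mul_one, ha]

namespace AlternatingCycle

variable {T Q : ℕ → ℕ → ℝ}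

theorem eq_zero_of_mul_eq_zero (hcycle : AlternatingCycle T Q)
    (hTpos : ∀ n k, k ≤ n → 0 < T n k) (hQdiag : ∀ n, 0 < Q n n) {k l m : ℕ}
    (hkl : k ≤ l) (hlm : l ≤ m) (h : Q k l * Q l m = 0) : Q k m = 0 := by
  have hpos : T m l * Q l l * T l k ≠ 0 :=
    (mul_pos (mul_pos (hTpos m l hlm) (hQdiag l)) (hTpos l k hkl)).ne'
  refine (mul_eq_zero.mp ?_).resolve_left hpos
  linear_combination hcycle l l k m + T m k * T l l * h

theorem eq_zero_of_gap (hcycle : AlternatingCycle T Q)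
    (hTpos : ∀ n k, k ≤ n → 0 < T n k) (hQdiag : ∀ n, 0 < Q n n) {m₀ k m : ℕ}
    (hgap : Q m₀ (m₀ + 1) = 0) (hk : k ≤ m₀) (hm : m₀ < m) : Q k m = 0 := by
  have hQm₀ : Q m₀ m = 0 :=
    hcycle.eq_zero_of_mul_eq_zero hTpos hQdiag m₀.le_succ hm (by rw [hgap, zero_mul])
  exact hcycle.eq_zero_of_mul_eq_zero hTpos hQdiag hk hm.le (by rw [hQm₀, mul_zero])

theorem detailed_balance (hcycle : AlternatingCycle T Q) {ν : ℕ → ℝ}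
    (hνrec : ∀ n, ν (n + 1) = ν n * (T n n / T (n + 1) n) * (Q n (n + 1) / Q n n))
    (hTpos : ∀ n k, k ≤ n → 0 < T n k) (hQdiag : ∀ n, 0 < Q n n) {n : ℕ}
    (hν : ∀ j < n, ν j ≠ 0) {k : ℕ} (hk : k ≤ n) :
    ν n * T n k * Q k k = ν k * T k k * Q k n := by
  induction n generalizing k with
  | zero => rw [Nat.le_zero.mp hk]
  | succ n ih =>
    obtain rfl | hlt := hk.eq_or_lt
    · rfl
    have hkn : k ≤ n := Nat.lt_succ_iff.mp hlt
    have IH := ih (fun j hj => hν j (by omega)) hkn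
    have hQkn : Q k n ≠ 0 := right_ne_zero_of_mul <| IH ▸
      mul_ne_zero (mul_ne_zero (hν n n.lt_succ_self) (hTpos n k hkn).ne') (hQdiag k).ne'
    have hT := (hTpos (n + 1) n n.le_succ).ne'
    have hQ := (hQdiag n).ne'
    rw [hνrec]
    field_simp
    apply mul_left_cancel₀ hQkn
    linear_combination
      -ν n * Q k k * hcycle n n k (n + 1) + T (n + 1) n * Q n n * Q k (n + 1) * IH

end AlternatingCycle

section Recursion

variable {T Q : ℕ → ℕ → ℝ} {ν : ℕ → ℝ}

theorem pos_of_recursion (hν0 : ν 0 = 1)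
    (hνrec : ∀ n, ν (n + 1) = ν n * (T n n / T (n + 1) n) * (Q n (n + 1) / Q n n))
    (hTpos : ∀ n k, k ≤ n → 0 < T n k) (hQ0 : ∀ k n, 0 ≤ Q k n)
    (hQdiag : ∀ n, 0 < Q n n) {n : ℕ} (hgap : ∀ m < n, Q m (m + 1) ≠ 0) : 0 < ν n := by
  induction n with
  | zero => rw [hν0]; exact one_pos
  | succ n ih =>
    have := ih fun m hm => hgap m (by omega)
    have := hTpos n n le_rfl
    have := hTpos (n + 1) n n.le_succ
    have := hQdiag n
    have := (hQ0 n (n + 1)).lt_of_ne' (hgap n n.lt_succ_self)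
    rw [hνrec]
    positivity

theorem eq_zero_of_recursion
    (hνrec : ∀ n, ν (n + 1) = ν n * (T n n / T (n + 1) n) * (Q n (n + 1) / Q n n))
    {m₀ n : ℕ} (hgap : Q m₀ (m₀ + 1) = 0) (hn : m₀ < n) : ν n = 0 := by
  induction n, hn using Nat.le_induction with
  | base => rw [hνrec, hgap, zero_div, mul_zero]
  | succ n _ ih => rw [hνrec, ih, zero_mul, zero_mul]

end Recursion

theorem stmt5_general
    (T Q : ℕ → ℕ → ℝ)
    (hTpos : ∀ n k : ℕ, k ≤ n → 0 < T n k)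
    (hTtri : ∀ n k, n < k → T n k = 0)
    (hQ0 : ∀ k n, 0 ≤ Q k n) (hQ1 : ∀ k, ∑' n, Q k n = 1)
    (hQtri : ∀ k n, n < k → Q k n = 0)
    (hQdiag : ∀ n, 0 < Q n n)
    (hcycle : ∀ i j k n : ℕ,
      T n i * Q i j * T j k * Q k n = T n k * Q k j * T j i * Q i n)
    (ν : ℕ → ℝ) (hν0 : ν 0 = 1)
    (hνrec : ∀ n : ℕ,
      ν (n + 1) = ν n * (T n n / T (n + 1) n) * (Q n (n + 1) / Q n n))
    (n₀ : ℕ∞)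
    (hn₀1 : ∀ m : ℕ, (m : ℕ∞) < n₀ → Q m (m + 1) ≠ 0)
    (hn₀2 : ∀ m : ℕ, (m : ℕ∞) = n₀ → Q m (m + 1) = 0) :
    (∀ n : ℕ, (n : ℕ∞) ≤ n₀ → 0 < ν n) ∧
    (∀ n : ℕ, n₀ < (n : ℕ∞) → ν n = 0) ∧
    (∀ n k : ℕ, (n : ℕ∞) ≤ n₀ → (k : ℕ∞) ≤ n₀ →
      ν n * T n k = (∑' j, ν j * T j k) * Q k n) := by
  have hcyc : AlternatingCycle T Q := hcycle
  have hνpos (n : ℕ) (hn : (n : ℕ∞) ≤ n₀) : 0 < ν n :=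
    pos_of_recursion hν0 hνrec hTpos hQ0 hQdiag fun m hm =>
      hn₀1 m ((Nat.cast_lt.mpr hm).trans_le hn)
  have hνzero (n : ℕ) (hn : n₀ < n) : ν n = 0 := by
    lift n₀ to ℕ using ne_top_of_lt hn
    exact eq_zero_of_recursion hνrec (hn₀2 n₀ rfl) (Nat.cast_lt.mp hn)
  have hpoint (k : ℕ) (hk : (k : ℕ∞) ≤ n₀) (j : ℕ) :
      ν j * T j k = ν k * T k k / Q k k * Q k j := by
    rw [div_mul_eq_mul_div, eq_div_iff (hQdiag k).ne']
    obtain hjk | hkj := lt_or_ge j k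
    · rw [hTtri j k hjk, hQtri k j hjk, mul_zero, zero_mul, mul_zero]
    obtain hj | hj := le_or_gt (j : ℕ∞) n₀
    · exact hcyc.detailed_balance hνrec hTpos hQdiag
        (fun i hi => (hνpos i ((Nat.cast_le.mpr hi.le).trans hj)).ne') hkj
    · rw [hνzero j hj]
      lift n₀ to ℕ using ne_top_of_lt hj
      rw [hcyc.eq_zero_of_gap hTpos hQdiag (hn₀2 n₀ rfl) (Nat.cast_le.mp hk)
        (Nat.cast_lt.mp hj)]
      ring
  exact ⟨hνpos, hνzero, fun n k _ hk => eq_tsum_mul_of_eq_const_mul (hQ1 k) (hpoint k hk) n⟩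

/-- Let `T` be a positive thinning matrix and `Q` an abstract condensation
matrix with positive diagonal satisfying the alternating cycle condition. Define `ν`
recursively by `ν 0 = 1` and
`ν n = ν (n-1) * (T (n-1) (n-1) / T n (n-1)) * (Q (n-1) n / Q (n-1) (n-1))`,
and let `n₀ ∈ ℕ ∪ {∞}` be the smallest index with `Q n₀ (n₀+1) = 0`. Then `ν n > 0` for all
`n ≤ n₀`, `ν n = 0` for all `n > n₀`, and `ν` satisfies the balance equations
`ν n * T n k = ν' k * Q k n` for all `n, k ≤ n₀`, where `ν' k = ∑_j ν j * T j k`. -/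
theorem stmt5
    (T Q : ℕ → ℕ → ℝ)
    (hTpos : ∀ n k : ℕ, k ≤ n → 0 < T n k) (hT1 : ∀ n, ∑' k, T n k = 1)
    (hTtri : ∀ n k, n < k → T n k = 0)
    (hQ0 : ∀ k n, 0 ≤ Q k n) (hQ1 : ∀ k, ∑' n, Q k n = 1)
    (hQtri : ∀ k n, n < k → Q k n = 0)
    (hQdiag : ∀ n, 0 < Q n n)
    (hcycle : ∀ i j k n : ℕ,
      T n i * Q i j * T j k * Q k n = T n k * Q k j * T j i * Q i n)
    (ν : ℕ → ℝ) (hν0 : ν 0 = 1)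
    (hνrec : ∀ n : ℕ,
      ν (n + 1) = ν n * (T n n / T (n + 1) n) * (Q n (n + 1) / Q n n))
    (n₀ : ℕ∞)
    (hn₀1 : ∀ m : ℕ, (m : ℕ∞) < n₀ → Q m (m + 1) ≠ 0)
    (hn₀2 : ∀ m : ℕ, (m : ℕ∞) = n₀ → Q m (m + 1) = 0) :
    (∀ n : ℕ, (n : ℕ∞) ≤ n₀ → 0 < ν n) ∧
    (∀ n : ℕ, n₀ < (n : ℕ∞) → ν n = 0) ∧
    (∀ n k : ℕ, (n : ℕ∞) ≤ n₀ → (k : ℕ∞) ≤ n₀ →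
      ν n * T n k = (∑' j, ν j * T j k) * Q k n) :=
  stmt5_general T Q hTpos hTtri hQ0 hQ1 hQtri hQdiag hcycle ν hν0 hνrec n₀ hn₀1 hn₀2
end

section
/- Let T be a positive thinning matrix (T_{n,k} > 0 for all k ≤ n) and Q an abstract condensation matrix with Q_{n,n} > 0 for all n, such that T and Q satisfy the alternating cycle condition T_{n,i} · Q_{i,j} · T_{j,k} · Q_{k,n} = T_{n,k} · Q_{k,j} · T_{j,i} · Q_{i,n} for all i, j, k, n ∈ ℕ. Define ν : ℕ → ℝ recursively by ν_0 = 1 and ν_n = ν_{n-1} · (T_{n-1,n-1} / T_{n,n-1}) · (Q_{n-1,n} / Q_{n-1,n-1}) for n ≥ 1. Then for all k < n such that Q_{j,j+1} > 0 for every j < n, one has ν_n · T_{n,k} · Q_{k,k} = ν_k · T_{k,k} · Q_{k,n}. -/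
/-!
Induct on `n` from `n = k + 1`. The recursion for `ν` moves one step from `n` to `n + 1`,
and the cycle condition for the indices `(k, n, n, n + 1)` converts the factor it introduces
into `T n k * Q k (n + 1) / (T (n + 1) k * Q k n)`; multiplying through by `T n k > 0`
avoids dividing by `Q k n`, which may vanish.
-/

def DetailedBalance (T Q : ℕ → ℕ → ℝ) (ν : ℕ → ℝ) (k n : ℕ) : Prop :=
  ν n * T n k * Q k k = ν k * T k k * Q k n

section

variable {T Q : ℕ → ℕ → ℝ} {ν : ℕ → ℝ}
  (hνrec : ∀ n : ℕ, ν (n + 1) = ν n * (T n n / T (n + 1) n) * (Q n (n + 1) / Q n n))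
include hνrec

theorem detailedBalance_succ_self {k : ℕ} (hT : T (k + 1) k ≠ 0) (hQ : Q k k ≠ 0) :
    DetailedBalance T Q ν k (k + 1) := by
  rw [DetailedBalance, hνrec k]
  field_simp

theorem DetailedBalance.succ
    (hcycle : ∀ i j k n : ℕ, T n i * Q i j * T j k * Q k n = T n k * Q k j * T j i * Q i n)
    {k n : ℕ} (hbal : DetailedBalance T Q ν k n) (hTnk : T n k ≠ 0) (hT : T (n + 1) n ≠ 0)
    (hQ : Q n n ≠ 0) : DetailedBalance T Q ν k (n + 1) := by
  unfold DetailedBalance at hbal ⊢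
  refine mul_right_cancel₀ hTnk ?_
  calc ν (n + 1) * T (n + 1) k * Q k k * T n k
      = ν n * T n k * Q k k * (T (n + 1) k * T n n * Q n (n + 1)) / (T (n + 1) n * Q n n) := by
        rw [hνrec n]; field_simp
    _ = ν k * T k k * (T (n + 1) k * Q k n * T n n * Q n (n + 1)) / (T (n + 1) n * Q n n) := by
        rw [hbal]; ring
    _ = ν k * T k k * (T (n + 1) n * Q n n * T n k * Q k (n + 1)) / (T (n + 1) n * Q n n) := by
        rw [hcycle k n n (n + 1)]
    _ = ν k * T k k * Q k (n + 1) * T n k := by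
        field_simp

end

theorem stmt6_general
    (T Q : ℕ → ℕ → ℝ)
    (hTpos : ∀ n k : ℕ, k ≤ n → 0 < T n k)
    (hQdiag : ∀ n, 0 < Q n n)
    (hcycle : ∀ i j k n : ℕ,
      T n i * Q i j * T j k * Q k n = T n k * Q k j * T j i * Q i n)
    (ν : ℕ → ℝ)
    (hνrec : ∀ n : ℕ,
      ν (n + 1) = ν n * (T n n / T (n + 1) n) * (Q n (n + 1) / Q n n)) :
    ∀ k n : ℕ, k < n → (∀ j : ℕ, j < n → 0 < Q j (j + 1)) →
      ν n * T n k * Q k k = ν k * T k k * Q k n := by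
  rintro k n hkn -
  induction n, hkn using Nat.le_induction with
  | base => exact detailedBalance_succ_self hνrec (hTpos _ _ k.le_succ).ne' (hQdiag k).ne'
  | succ n hkn ih =>
    exact DetailedBalance.succ hνrec hcycle ih (hTpos _ _ (Nat.le_of_succ_le hkn)).ne'
      (hTpos _ _ n.le_succ).ne' (hQdiag n).ne'

/-- With `T` a positive thinning matrix, `Q` an abstract condensation
matrix with positive diagonal satisfying the alternating cycle condition, and `ν` defined
by the recursion `ν 0 = 1`,
`ν n = ν (n-1) * (T (n-1) (n-1) / T n (n-1)) * (Q (n-1) n / Q (n-1) (n-1))`: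
for all `k < n` such that `Q j (j+1) > 0` for every `j < n`, one has
`ν n * T n k * Q k k = ν k * T k k * Q k n`. -/
theorem stmt6
    (T Q : ℕ → ℕ → ℝ)
    (hTpos : ∀ n k : ℕ, k ≤ n → 0 < T n k) (hT1 : ∀ n, ∑' k, T n k = 1)
    (hTtri : ∀ n k, n < k → T n k = 0)
    (hQ0 : ∀ k n, 0 ≤ Q k n) (hQ1 : ∀ k, ∑' n, Q k n = 1)
    (hQtri : ∀ k n, n < k → Q k n = 0)
    (hQdiag : ∀ n, 0 < Q n n)
    (hcycle : ∀ i j k n : ℕ,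
      T n i * Q i j * T j k * Q k n = T n k * Q k j * T j i * Q i n)
    (ν : ℕ → ℝ) (hν0 : ν 0 = 1)
    (hνrec : ∀ n : ℕ,
      ν (n + 1) = ν n * (T n n / T (n + 1) n) * (Q n (n + 1) / Q n n)) :
    ∀ k n : ℕ, k < n → (∀ j : ℕ, j < n → 0 < Q j (j + 1)) →
      ν n * T n k * Q k k = ν k * T k k * Q k n :=
  stmt6_general T Q hTpos hQdiag hcycle ν hνrec
end

section
/- Let T be a positive thinning matrix (T_{n,k} > 0 for all k ≤ n) and Q an abstract condensation matrix with Q_{n,n} > 0 for all n, such that T and Q satisfy the alternating cycle condition T_{n,i} · Q_{i,j} · T_{j,k} · Q_{k,n} = T_{n,k} · Q_{k,j} · T_{j,i} · Q_{i,n} for all i, j, k, n ∈ ℕ. Define ν : ℕ → ℝ recursively by ν_0 = 1 and ν_n = ν_{n-1} · (T_{n-1,n-1} / T_{n,n-1}) · (Q_{n-1,n} / Q_{n-1,n-1}) for n ≥ 1, and let n₀ ∈ ℕ ∪ {∞} be the smallest index with Q_{n₀,n₀+1} = 0 (with n₀ = ∞ if no such index exists). Then for all j, k, n ≤ n₀ with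 k ≤ n, one has ν_j · T_{j,k} · Q_{k,n} = ν_n · T_{n,k} · Q_{k,j}. -/
/-!
Since `Q` has positive diagonal and `T` is positive, the recursion keeps `ν` positive up to `n₀`.
The case `j = k` is proved by induction on `n`: multiplying the step `n → n + 1` by `Q k n`
turns it into the alternating cycle condition for `(k, n, n, n + 1)` together with the induction
hypothesis, and `Q k n ≠ 0` because the induction hypothesis equates it with a positive quantity.
The general case follows by comparing the cases `(j, k, k)` and `(n, k, k)` and cancelling `Q k k`;
when `j < k` both sides vanish by triangularity.
-/

namespace ThinningCondensation

variable {T Q : ℕ → ℕ → ℝ} {ν : ℕ → ℝ}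

theorem weight_pos (hTpos : ∀ n k : ℕ, k ≤ n → 0 < T n k) (hQ0 : ∀ k n, 0 ≤ Q k n)
    (hQdiag : ∀ n, 0 < Q n n) (hν0 : ν 0 = 1)
    (hνrec : ∀ n : ℕ, ν (n + 1) = ν n * (T n n / T (n + 1) n) * (Q n (n + 1) / Q n n)) :
    ∀ {n : ℕ}, (∀ m < n, Q m (m + 1) ≠ 0) → 0 < ν n
  | 0, _ => hν0 ▸ one_pos
  | m + 1, hQsucc => by
    have hνm : 0 < ν m := weight_pos hTpos hQ0 hQdiag hν0 hνrec fun i hi => hQsucc i (by omega)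
    have hQm : 0 < Q m (m + 1) := (hQ0 m (m + 1)).lt_of_ne' (hQsucc m m.lt_succ_self)
    have hTmm := hTpos m m le_rfl
    have hTm := hTpos (m + 1) m m.le_succ
    have hQmm := hQdiag m
    rw [hνrec]
    positivity

theorem weight_mul_diag_balance (hTpos : ∀ n k : ℕ, k ≤ n → 0 < T n k)
    (hQ0 : ∀ k n, 0 ≤ Q k n) (hQdiag : ∀ n, 0 < Q n n)
    (hcycle : ∀ i j k n : ℕ, T n i * Q i j * T j k * Q k n = T n k * Q k j * T j i * Q i n)
    (hν0 : ν 0 = 1)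
    (hνrec : ∀ n : ℕ, ν (n + 1) = ν n * (T n n / T (n + 1) n) * (Q n (n + 1) / Q n n)) :
    ∀ {n k : ℕ}, k ≤ n → (∀ m < n, Q m (m + 1) ≠ 0) →
      ν k * T k k * Q k n = ν n * T n k * Q k k
  | 0, k, hk, _ => by obtain rfl : k = 0 := Nat.le_zero.mp hk; rfl
  | m + 1, k, hk, hQsucc => by
    rcases Nat.lt_or_eq_of_le hk with hkm | rfl
    · have hQsucc' : ∀ i < m, Q i (i + 1) ≠ 0 := fun i hi => hQsucc i (by omega)
      have ih := weight_mul_diag_balance hTpos hQ0 hQdiag hcycle hν0 hνrec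
        (Nat.le_of_lt_succ hkm) hQsucc'
      have hpos : 0 < ν m * T m k * Q k k := mul_pos (mul_pos
        (weight_pos hTpos hQ0 hQdiag hν0 hνrec hQsucc') (hTpos m k (by omega))) (hQdiag k)
      have hQkm : Q k m ≠ 0 := right_ne_zero_of_mul (ih.trans_ne hpos.ne')
      have hTm : T (m + 1) m ≠ 0 := (hTpos (m + 1) m m.le_succ).ne'
      have hQmm : Q m m ≠ 0 := (hQdiag m).ne'
      rw [hνrec]
      field_simp
      refine mul_left_cancel₀ hQkm ?_
      linear_combination
        T (m + 1) m * Q m m * Q k (m + 1) * ih - ν m * Q k k * hcycle k m m (m + 1)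
    · rfl

theorem weight_mul_balance (hTpos : ∀ n k : ℕ, k ≤ n → 0 < T n k)
    (hTtri : ∀ n k, n < k → T n k = 0) (hQ0 : ∀ k n, 0 ≤ Q k n)
    (hQtri : ∀ k n, n < k → Q k n = 0) (hQdiag : ∀ n, 0 < Q n n)
    (hcycle : ∀ i j k n : ℕ, T n i * Q i j * T j k * Q k n = T n k * Q k j * T j i * Q i n)
    (hν0 : ν 0 = 1)
    (hνrec : ∀ n : ℕ, ν (n + 1) = ν n * (T n n / T (n + 1) n) * (Q n (n + 1) / Q n n))
    {j k n : ℕ} (hkn : k ≤ n) (hj : ∀ m < j, Q m (m + 1) ≠ 0) (hn : ∀ m < n, Q m (m + 1) ≠ 0) :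
    ν j * T j k * Q k n = ν n * T n k * Q k j := by
  rcases le_or_gt k j with hkj | hjk
  · have hj' := weight_mul_diag_balance hTpos hQ0 hQdiag hcycle hν0 hνrec hkj hj
    have hn' := weight_mul_diag_balance hTpos hQ0 hQdiag hcycle hν0 hνrec hkn hn
    refine mul_right_cancel₀ (hQdiag k).ne' ?_
    linear_combination Q k j * hn' - Q k n * hj'
  · rw [hTtri j k hjk, hQtri k j hjk]
    ring

end ThinningCondensation

open ThinningCondensation in
theorem stmt7_general
    (T Q : ℕ → ℕ → ℝ)
    (hTpos : ∀ n k : ℕ, k ≤ n → 0 < T n k)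
    (hTtri : ∀ n k, n < k → T n k = 0)
    (hQ0 : ∀ k n, 0 ≤ Q k n)
    (hQtri : ∀ k n, n < k → Q k n = 0)
    (hQdiag : ∀ n, 0 < Q n n)
    (hcycle : ∀ i j k n : ℕ,
      T n i * Q i j * T j k * Q k n = T n k * Q k j * T j i * Q i n)
    (ν : ℕ → ℝ) (hν0 : ν 0 = 1)
    (hνrec : ∀ n : ℕ,
      ν (n + 1) = ν n * (T n n / T (n + 1) n) * (Q n (n + 1) / Q n n))
    (n₀ : ℕ∞)
    (hn₀1 : ∀ m : ℕ, (m : ℕ∞) < n₀ → Q m (m + 1) ≠ 0) :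
    ∀ j k n : ℕ, (j : ℕ∞) ≤ n₀ → (k : ℕ∞) ≤ n₀ → (n : ℕ∞) ≤ n₀ → k ≤ n →
      ν j * T j k * Q k n = ν n * T n k * Q k j := by
  intro j k n hj _ hn hkn
  have hQsucc : ∀ i : ℕ, (i : ℕ∞) ≤ n₀ → ∀ m < i, Q m (m + 1) ≠ 0 := fun i hi m hm =>
    hn₀1 m ((Nat.cast_lt.mpr hm).trans_le hi)
  exact weight_mul_balance hTpos hTtri hQ0 hQtri hQdiag hcycle hν0 hνrec hkn
    (hQsucc j hj) (hQsucc n hn)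

/-- With `T` a positive thinning matrix, `Q` an abstract condensation
matrix with positive diagonal satisfying the alternating cycle condition, `ν` defined by
the recursion `ν 0 = 1`,
`ν n = ν (n-1) * (T (n-1) (n-1) / T n (n-1)) * (Q (n-1) n / Q (n-1) (n-1))`,
and `n₀ ∈ ℕ ∪ {∞}` the smallest index with `Q n₀ (n₀+1) = 0`: for all `j, k, n ≤ n₀` with
`k ≤ n`, one has `ν j * T j k * Q k n = ν n * T n k * Q k j`. -/
theorem stmt7
    (T Q : ℕ → ℕ → ℝ)
    (hTpos : ∀ n k : ℕ, k ≤ n → 0 < T n k) (hT1 : ∀ n, ∑' k, T n k = 1)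
    (hTtri : ∀ n k, n < k → T n k = 0)
    (hQ0 : ∀ k n, 0 ≤ Q k n) (hQ1 : ∀ k, ∑' n, Q k n = 1)
    (hQtri : ∀ k n, n < k → Q k n = 0)
    (hQdiag : ∀ n, 0 < Q n n)
    (hcycle : ∀ i j k n : ℕ,
      T n i * Q i j * T j k * Q k n = T n k * Q k j * T j i * Q i n)
    (ν : ℕ → ℝ) (hν0 : ν 0 = 1)
    (hνrec : ∀ n : ℕ,
      ν (n + 1) = ν n * (T n n / T (n + 1) n) * (Q n (n + 1) / Q n n))
    (n₀ : ℕ∞)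
    (hn₀1 : ∀ m : ℕ, (m : ℕ∞) < n₀ → Q m (m + 1) ≠ 0)
    (hn₀2 : ∀ m : ℕ, (m : ℕ∞) = n₀ → Q m (m + 1) = 0) :
    ∀ j k n : ℕ, (j : ℕ∞) ≤ n₀ → (k : ℕ∞) ≤ n₀ → (n : ℕ∞) ≤ n₀ → k ≤ n →
      ν j * T j k * Q k n = ν n * T n k * Q k j :=
  stmt7_general T Q hTpos hTtri hQ0 hQtri hQdiag hcycle ν hν0 hνrec n₀ hn₀1
end

section
/- Fix q ∈ (0,1) and let T be the independent q-thinning matrix, T_{n,k} = C(n,k) · q^k · (1-q)^{n-k} for k ≤ n and T_{n,k} = 0 for k > n. Let ν be a probability distribution on ℕ whose support is an initial segment (if ν_m = 0 for some m then ν_n = 0 for all n ≥ m), and let Q be a condensation matrix for (ν, T). Then (i) for every n ≥ 1 with ν_{n-1} > 0, (1-q) · n · ν_n = ν_{n-1} · (Q_{n-1,n} / Q_{n-1,n-1}); and (ii) ν satisfies the integration-by-parts formula with Papangelou function π(n) = Q_{n,n+1} / ((1-q) · Q_{n,n}): for every g : ℕ → ℝ with g ≥ 0, ∑_{n ≥ 1}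 g(n) · n · ν_n = ∑_{n ≥ 0} g(n+1) · π(n) · ν_n. -/
/-!
Dividing the balance equations `ν' n Q n m = ν m T m n` for `m = n + 1` and `m = n` eliminates
the unknown `ν'`. For binomial thinning `T (n+1) n / T n n = (n+1)(1-q)`, so this gives
`(1-q)(n+1) ν (n+1) Q n n = ν n Q n (n+1)`, which is (i) after division by `Q n n > 0`
(positive as soon as `ν n > 0`). Summing (i) against `g (n+1)` gives (ii); the terms with
`ν n = 0` vanish on both sides because the support of `ν` is an initial segment.
-/

section Balance

variable {ν ν' : ℕ → ℝ} {T Q : ℕ → ℕ → ℝ}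

theorem balance_cross (hbal : ∀ k n, ν' k * Q k n = ν n * T n k) (k m n : ℕ) :
    ν m * T m k * Q k n = ν n * T n k * Q k m := by
  rw [← hbal k m, ← hbal k n]
  ring

theorem condensation_diag_ne_zero (hbal : ∀ k n, ν' k * Q k n = ν n * T n k) {n : ℕ}
    (h : ν n * T n n ≠ 0) : Q n n ≠ 0 := by
  rintro hQ
  apply h
  rw [← hbal n n, hQ, mul_zero]

end Balance

def binomialThinning (q : ℝ) (n k : ℕ) : ℝ :=
  if k ≤ n then (n.choose k : ℝ) * q ^ k * (1 - q) ^ (n - k) else 0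

theorem binomialThinning_self (q : ℝ) (n : ℕ) : binomialThinning q n n = q ^ n := by
  simp [binomialThinning]

theorem binomialThinning_succ_self (q : ℝ) (n : ℕ) :
    binomialThinning q (n + 1) n = ((n : ℝ) + 1) * q ^ n * (1 - q) := by
  simp [binomialThinning, Nat.choose_succ_self_right]

section BinomialBalance

variable {q : ℝ} {ν ν' : ℕ → ℝ} {Q : ℕ → ℕ → ℝ}

theorem binomialThinning_balance_step (hq : q ≠ 0)
    (hbal : ∀ k n, ν' k * Q k n = ν n * binomialThinning q n k) (n : ℕ) :
    (1 - q) * ((n : ℝ) + 1) * ν (n + 1) * Q n n = ν n * Q n (n + 1) := by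
  have hcross := balance_cross hbal n (n + 1) n
  rw [binomialThinning_self, binomialThinning_succ_self] at hcross
  apply mul_left_cancel₀ (pow_ne_zero n hq)
  linear_combination hcross

theorem binomialThinning_diag_ne_zero (hq : q ≠ 0)
    (hbal : ∀ k n, ν' k * Q k n = ν n * binomialThinning q n k) {n : ℕ} (hn : ν n ≠ 0) :
    Q n n ≠ 0 :=
  condensation_diag_ne_zero hbal <| by
    rw [binomialThinning_self]
    exact mul_ne_zero hn (pow_ne_zero n hq)

theorem binomialThinning_balance_ratio (hq : q ≠ 0)
    (hbal : ∀ k n, ν' k * Q k n = ν n * binomialThinning q n k) {n : ℕ} (hn : ν n ≠ 0) :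
    (1 - q) * ((n : ℝ) + 1) * ν (n + 1) = ν n * (Q n (n + 1) / Q n n) := by
  have hQ := binomialThinning_diag_ne_zero hq hbal hn
  rw [mul_div_assoc', eq_div_iff hQ]
  exact binomialThinning_balance_step hq hbal n

theorem binomialThinning_papangelou (hq : q ∈ Set.Ioo (0 : ℝ) 1)
    (hbal : ∀ k n, ν' k * Q k n = ν n * binomialThinning q n k)
    (hsupp : ∀ m n : ℕ, ν m = 0 → m ≤ n → ν n = 0) (n : ℕ) :
    ((n : ℝ) + 1) * ν (n + 1) = Q n (n + 1) / ((1 - q) * Q n n) * ν n := by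
  by_cases hn : ν n = 0
  · rw [hn, hsupp n (n + 1) hn n.le_succ, mul_zero, mul_zero]
  · have h1q : 1 - q ≠ 0 := sub_ne_zero.mpr hq.2.ne'
    have hQ := binomialThinning_diag_ne_zero hq.1.ne' hbal hn
    have hstep := binomialThinning_balance_step hq.1.ne' hbal n
    field_simp
    linear_combination hstep

end BinomialBalance

theorem stmt9_general
    (q : ℝ) (hq : q ∈ Set.Ioo (0 : ℝ) 1)
    (T : ℕ → ℕ → ℝ)
    (hT : ∀ n k : ℕ, T n k =
      if k ≤ n then (n.choose k : ℝ) * q ^ k * (1 - q) ^ (n - k) else 0)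
    (ν : ℕ → ℝ)
    (hsupp : ∀ m n : ℕ, ν m = 0 → m ≤ n → ν n = 0)
    (ν' : ℕ → ℝ)
    (Q : ℕ → ℕ → ℝ)
    (hbal : ∀ k n, ν' k * Q k n = ν n * T n k) :
    (∀ n : ℕ, 1 ≤ n → 0 < ν (n - 1) →
      (1 - q) * (n : ℝ) * ν n = ν (n - 1) * (Q (n - 1) n / Q (n - 1) (n - 1))) ∧
    (∀ g : ℕ → ℝ, (∀ n, 0 ≤ g n) →
      ∑' n : ℕ, g (n + 1) * ((n : ℝ) + 1) * ν (n + 1)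
        = ∑' n : ℕ, g (n + 1) * (Q n (n + 1) / ((1 - q) * Q n n)) * ν n) := by
  obtain rfl : T = binomialThinning q := funext fun n => funext (hT n)
  refine ⟨fun n hn hpos => ?_, fun g _ => tsum_congr fun n => ?_⟩
  · obtain ⟨m, rfl⟩ := Nat.exists_eq_add_of_le' hn
    rw [Nat.add_sub_cancel] at hpos ⊢
    push_cast
    exact binomialThinning_balance_ratio hq.1.ne' hbal hpos.ne'
  · rw [mul_assoc, mul_assoc, binomialThinning_papangelou hq hbal hsupp n]

/-- For the independent `q`-thinning matrix
`T n k = C(n,k) q^k (1-q)^(n-k)` (and `0` for `k > n`), a probability distribution `ν` whose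
support is an initial segment, and a condensation matrix `Q` for `(ν, T)`:
(i) for every `n ≥ 1` with `ν (n-1) > 0`,
`(1-q) * n * ν n = ν (n-1) * (Q (n-1) n / Q (n-1) (n-1))`; and
(ii) the integration-by-parts formula with Papangelou function
`π n = Q n (n+1) / ((1-q) * Q n n)` holds: for every nonnegative `g`,
`∑_{n ≥ 1} g n * n * ν n = ∑_{n ≥ 0} g (n+1) * π n * ν n`. -/
theorem stmt9
    (q : ℝ) (hq : q ∈ Set.Ioo (0 : ℝ) 1)
    (T : ℕ → ℕ → ℝ)
    (hT : ∀ n k : ℕ, T n k =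
      if k ≤ n then (n.choose k : ℝ) * q ^ k * (1 - q) ^ (n - k) else 0)
    (ν : ℕ → ℝ) (hν0 : ∀ n, 0 ≤ ν n) (hν1 : ∑' n, ν n = 1)
    (hsupp : ∀ m n : ℕ, ν m = 0 → m ≤ n → ν n = 0)
    (ν' : ℕ → ℝ) (hν' : ∀ k, ν' k = ∑' n, ν n * T n k)
    (Q : ℕ → ℕ → ℝ)
    (hQ0 : ∀ k n, 0 ≤ Q k n) (hQ1 : ∀ k, ∑' n, Q k n = 1)
    (hbal : ∀ k n, ν' k * Q k n = ν n * T n k) :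
    (∀ n : ℕ, 1 ≤ n → 0 < ν (n - 1) →
      (1 - q) * (n : ℝ) * ν n = ν (n - 1) * (Q (n - 1) n / Q (n - 1) (n - 1))) ∧
    (∀ g : ℕ → ℝ, (∀ n, 0 ≤ g n) →
      ∑' n : ℕ, g (n + 1) * ((n : ℝ) + 1) * ν (n + 1)
        = ∑' n : ℕ, g (n + 1) * (Q n (n + 1) / ((1 - q) * Q n n)) * ν n) :=
  stmt9_general q hq T hT ν hsupp ν' Q hbal
end

section
/- Fix α > 1 and for s > 1, a > 0 write ζ_{s,a} = ∑_{j ≥ 0} (j+a)^{-s} (Hurwitz zeta sum). Let ν be the power law ν_n = ζ_{α,1}^{-1} (n+1)^{-α}, and let T be the uniform thinning matrix, T_{n,k} = 1/(n+1) for k ≤ n, T_{n,k} = 0 for k > n. Then (i) the thinning ν' = νT satisfies ν'_k = ζ_{α+1,k+1} / ζ_{α,1} for all k; (ii) the matrix Q defined by Q_{k,n} = (n+1)^{-(α+1)} / ζ_{α+1,k+1} for n ≥ k and Q_{k,n} = 0 for n < k is a condensation matrix for (ν, T): it is stochastic and satisfies ν'_k · Q_{k,n} = ν_n · T_{n,k}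 for all k, n; (iii) for every n ≥ 1, Q_{n-1,n} / Q_{n-1,n-1} = (n/(n+1))^{α+1}; and (iv) the splitting matrix satisfies Υ_{k,l} = Q_{k,k+l} = 1 / (ζ_{α+1,k+1} · (k+l+1)^{α+1}) for all k, l ≥ 0. -/
/-!
Since `(n+1)^{-α} · (n+1)^{-1} = (n+1)^{-(α+1)}`, the product `ν_n T_{n,k}` is the row
`[k ≤ n] (n+1)^{-(α+1)}` divided by `ζ_{α,1}`. Summing over `n` gives the tail sum
`∑_{n ≥ k} (n+1)^{-(α+1)} = ζ_{α+1,k+1}`, which is `ν'_k ζ_{α,1}`; and `Q_{k,·}` is that same row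
normalised by its total mass `ζ_{α+1,k+1} > 0`, whence stochasticity and the balance equations.
-/

/-- The Hurwitz zeta sum `ζ_{s,a} = ∑_{j ≥ 0} (j+a)^{-s}`. -/
noncomputable def hurwitzZetaSum (s a : ℝ) : ℝ :=
  ∑' j : ℕ, ((j : ℝ) + a) ^ (-s)

theorem hurwitzZetaSum_summable {s a : ℝ} (hs : 1 < s) (ha : 0 < a) :
    Summable fun j : ℕ => ((j : ℝ) + a) ^ (-s) := by
  refine ((Real.summable_one_div_nat_add_rpow a s).2 hs).congr fun j => ?_
  have hja : 0 < (j : ℝ) + a := by positivity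
  rw [abs_of_pos hja, one_div, Real.rpow_neg hja.le]

theorem hurwitzZetaSum_pos {s a : ℝ} (hs : 1 < s) (ha : 0 < a) : 0 < hurwitzZetaSum s a :=
  (hurwitzZetaSum_summable hs ha).tsum_pos (fun j => by positivity) 0 (by positivity)

theorem tsum_ite_le_eq_tsum_add {M : Type*} [AddCommMonoid M] [TopologicalSpace M]
    (f : ℕ → M) (k : ℕ) :
    ∑' n, (if k ≤ n then f n else 0) = ∑' j, f (j + k) := by
  rw [← (add_left_injective k).tsum_eq]
  · exact tsum_congr fun j => if_pos (Nat.le_add_left k j)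
  · intro n hn
    exact ⟨n - k, Nat.sub_add_cancel (not_not.1 fun h => hn (if_neg h))⟩

noncomputable def powerTail (s : ℝ) (k n : ℕ) : ℝ :=
  if k ≤ n then ((n : ℝ) + 1) ^ (-s) else 0

theorem powerTail_nonneg (s : ℝ) (k n : ℕ) : 0 ≤ powerTail s k n := by
  unfold powerTail; split_ifs <;> positivity

theorem tsum_powerTail (s : ℝ) (k : ℕ) :
    ∑' n, powerTail s k n = hurwitzZetaSum s ((k : ℝ) + 1) := by
  unfold powerTail
  rw [tsum_ite_le_eq_tsum_add, hurwitzZetaSum]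
  refine tsum_congr fun j => ?_
  push_cast
  ring_nf

theorem rpow_neg_div_rpow_neg {x y : ℝ} (hx : 0 ≤ x) (hy : 0 ≤ y) (s : ℝ) :
    x ^ (-s) / y ^ (-s) = (y / x) ^ s := by
  rw [Real.rpow_neg hx, Real.rpow_neg hy, inv_div_inv, Real.div_rpow hy hx]

/-- Power law example under uniform thinning: let `α > 1`,
`ν n = ζ_{α,1}⁻¹ (n+1)^{-α}`, and `T` the uniform thinning matrix. Then
(i) `ν' k = ζ_{α+1,k+1} / ζ_{α,1}`;
(ii) `Q k n = (n+1)^{-(α+1)} / ζ_{α+1,k+1}` for `n ≥ k` (and `0` for `n < k`) is a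
condensation matrix for `(ν, T)`;
(iii) `Q (n-1) n / Q (n-1) (n-1) = (n/(n+1))^{α+1}` for every `n ≥ 1`; and
(iv) the splitting matrix satisfies
`Υ k l = Q k (k+l) = 1 / (ζ_{α+1,k+1} (k+l+1)^{α+1})` for all `k l`. -/
theorem stmt14
    (α : ℝ) (hα : 1 < α)
    (ν : ℕ → ℝ)
    (hν : ∀ n : ℕ, ν n = (hurwitzZetaSum α 1)⁻¹ * ((n : ℝ) + 1) ^ (-α))
    (T : ℕ → ℕ → ℝ)
    (hT : ∀ n k : ℕ, T n k = if k ≤ n then 1 / ((n : ℝ) + 1) else 0)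
    (ν' : ℕ → ℝ) (hν' : ∀ k, ν' k = ∑' n, ν n * T n k)
    (Q : ℕ → ℕ → ℝ)
    (hQ : ∀ k n : ℕ, Q k n =
      if k ≤ n then
        ((n : ℝ) + 1) ^ (-(α + 1)) / hurwitzZetaSum (α + 1) ((k : ℝ) + 1)
      else 0) :
    (∀ k : ℕ, ν' k = hurwitzZetaSum (α + 1) ((k : ℝ) + 1) / hurwitzZetaSum α 1) ∧
    ((∀ k n, 0 ≤ Q k n) ∧ (∀ k, ∑' n, Q k n = 1) ∧
      (∀ k n, ν' k * Q k n = ν n * T n k)) ∧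
    (∀ n : ℕ, 1 ≤ n →
      Q (n - 1) n / Q (n - 1) (n - 1) = ((n : ℝ) / ((n : ℝ) + 1)) ^ (α + 1)) ∧
    (∀ k l : ℕ,
      Q k (k + l) =
        1 / (hurwitzZetaSum (α + 1) ((k : ℝ) + 1) * ((k : ℝ) + (l : ℝ) + 1) ^ (α + 1))) := by
  have hζ : ∀ k : ℕ, 0 < hurwitzZetaSum (α + 1) ((k : ℝ) + 1) := fun k =>
    hurwitzZetaSum_pos (by linarith) (by positivity)
  have hQ' : ∀ k n, Q k n = powerTail (α + 1) k n / hurwitzZetaSum (α + 1) ((k : ℝ) + 1) :=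
    fun k n => by rw [hQ, powerTail]; split_ifs <;> simp only [zero_div]
  have hνT : ∀ k n, ν n * T n k = powerTail (α + 1) k n / hurwitzZetaSum α 1 := fun k n => by
    rw [hν, hT, powerTail, neg_add, Real.rpow_add (by positivity), Real.rpow_neg_one]
    split_ifs <;> ring
  have hthin : ∀ k : ℕ, ν' k = hurwitzZetaSum (α + 1) ((k : ℝ) + 1) / hurwitzZetaSum α 1 :=
    fun k => by simp_rw [hν', hνT, tsum_div_const, tsum_powerTail]
  refine ⟨hthin, ⟨fun k n => ?_, fun k => ?_, fun k n => ?_⟩, fun n hn => ?_, fun k l => ?_⟩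
  · rw [hQ']; exact div_nonneg (powerTail_nonneg _ k n) (hζ k).le
  · simp_rw [hQ', tsum_div_const, tsum_powerTail, div_self (hζ k).ne']
  · rw [hthin, hQ', hνT, div_mul_div_comm, mul_comm (hurwitzZetaSum _ _),
      mul_div_mul_right _ _ (hζ k).ne']
  · obtain ⟨m, rfl⟩ := Nat.exists_eq_add_of_le' hn
    rw [hQ, hQ, if_pos (by omega), if_pos le_rfl, div_div_div_cancel_right₀ (hζ _).ne',
      rpow_neg_div_rpow_neg (by positivity) (by positivity)]
    simp
  · rw [hQ, if_pos (Nat.le_add_right k l), Real.rpow_neg (by positivity)]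
    push_cast
    ring
end

section
/- Let Y be a standard Borel (measurable) space, P a probability measure on Y, T a Markov kernel from Y to Y, and P' the measure on Y given by P'(A) = ∫ T_μ(A) P(dμ). Let Q be a Markov kernel from Y to Y satisfying the disintegration property: for every measurable f : Y × Y → [0,∞], ∫∫ f(η, μ) T_μ(dη) P(dμ) = ∫∫ f(η, μ) Q_η(dμ) P'(dη). Then for every measurable g : Y × Y × Y × Y → [0,∞] the alternating cycle identity holds: ∫∫∫∫ g(κ, μ, λ, ν) · T_ν({κ}) Q_λ(dν) T_μ(dλ) Q_κ(dμ) P'(dκ) = ∫∫∫∫ g(κ, μ, λ, ν) · T_μ({κ}) Q_λ(dμ) T_ν(dλ) Q_κ(dν) P'(dκ). -/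
/-!
Read through the disintegration, drawing `κ ~ P'` and then `μ ~ Q_κ` is the same as drawing
`μ ~ P` and then `κ ~ T_μ`. Applying this twice re-roots the chain `κ → μ → λ → ν` at `λ`,
after which `μ` and `ν` are two independent draws from `Q_λ`, and `κ` is drawn from `T_μ`
independently of `λ, ν`. In the re-rooted form the weight enters only through
`∫ h(κ) T_ν({κ}) T_μ(dκ)`, the sum of `h(κ) T_μ({κ}) T_ν({κ})` over the common atoms, which is
symmetric in `μ` and `ν`. Exchanging `μ` and `ν` then turns one side into the other.
-/

open MeasureTheory ProbabilityTheory
open scoped ENNReal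

@[fun_prop]
lemma Measurable.lintegral_kernel_comp {α β γ : Type*} [MeasurableSpace α] [MeasurableSpace β]
    [MeasurableSpace γ] (κ : Kernel γ β) [IsSFiniteKernel κ] {j : α → γ} (hj : Measurable j)
    {f : α → β → ℝ≥0∞} (hf : Measurable (Function.uncurry f)) :
    Measurable fun a => ∫⁻ b, f a b ∂κ (j a) :=
  hf.lintegral_kernel_prod_right (κ := κ.comap j hj)

lemma ProbabilityTheory.Kernel.measurable_measure_singleton {α β : Type*} [MeasurableSpace α]
    [MeasurableSpace β] [MeasurableEq β] (κ : Kernel α β) [IsSFiniteKernel κ] :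
    Measurable fun p : α × β => κ p.1 {p.2} := by
  simpa using (κ.comap Prod.fst measurable_fst).measurable_kernel_prodMk_left
    (measurableSet_eq_fun measurable_fst.snd measurable_snd)

lemma lintegral_mul_measure_singleton_comm {α : Type*} [MeasurableSpace α] [MeasurableEq α]
    (m₁ m₂ : Measure α) [SFinite m₁] [SFinite m₂] {φ : α → ℝ≥0∞} (hφ : Measurable φ) :
    ∫⁻ a, φ a * m₂ {a} ∂m₁ = ∫⁻ a, φ a * m₁ {a} ∂m₂ := by
  set D : Set (α × α) := Set.diagonal α
  have hD : Measurable (D.indicator fun p => φ p.1) :=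
    (hφ.comp measurable_fst).indicator measurableSet_diagonal
  have h₁ (m : Measure α) (a : α) :
      ∫⁻ b, D.indicator (fun p => φ p.1) (a, b) ∂m = φ a * m {a} := by
    rw [← lintegral_indicator_const (measurableSet_singleton a)]
    congr 1 with b
    by_cases h : a = b <;> simp [D, h, eq_comm]
  have h₂ (m : Measure α) (b : α) :
      ∫⁻ a, D.indicator (fun p => φ p.1) (a, b) ∂m = φ b * m {b} := by
    rw [← lintegral_indicator_const (measurableSet_singleton b)]
    congr 1 with a
    by_cases h : a = b <;> simp [D, h]
  calc ∫⁻ a, φ a * m₂ {a} ∂m₁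
      = ∫⁻ a, ∫⁻ b, D.indicator (fun p => φ p.1) (a, b) ∂m₂ ∂m₁ := by simp_rw [h₁]
    _ = ∫⁻ b, ∫⁻ a, D.indicator (fun p => φ p.1) (a, b) ∂m₁ ∂m₂ :=
      lintegral_lintegral_swap hD.aemeasurable
    _ = ∫⁻ b, φ b * m₁ {b} ∂m₂ := by simp_rw [h₂]

lemma lintegral_lintegral_kernel_mul_singleton_comm {α : Type*} [MeasurableSpace α]
    [MeasurableEq α] (m : Measure α) [SFinite m] (T : Kernel α α) [IsSFiniteKernel T]
    {G : α → α → α → ℝ≥0∞} (hG : Measurable fun p : α × α × α => G p.1 p.2.1 p.2.2) :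
    ∫⁻ a, ∫⁻ b, ∫⁻ c, G c a b * T b {c} ∂T a ∂m ∂m
      = ∫⁻ b, ∫⁻ a, ∫⁻ c, G c a b * T a {c} ∂T b ∂m ∂m := by
  have hT := T.measurable_measure_singleton
  have hF : Measurable (Function.uncurry fun a b => ∫⁻ c, G c a b * T b {c} ∂T a) :=
    Measurable.lintegral_kernel_comp T measurable_fst
      ((by fun_prop : Measurable fun q : (α × α) × α => G q.2 q.1.1 q.1.2).mul
        (hT.comp (f := fun q : (α × α) × α => (q.1.2, q.2)) (by fun_prop)))
  rw [lintegral_lintegral_swap hF.aemeasurable]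
  refine lintegral_congr fun b => lintegral_congr fun a => ?_
  exact lintegral_mul_measure_singleton_comm _ _ (by fun_prop)

lemma lintegral_lintegral_kernel_swap {α β γ : Type*} [MeasurableSpace α] [MeasurableSpace β]
    [MeasurableSpace γ] (m : Measure α) (m' : Measure β) [SFinite m] [SFinite m']
    (η : Kernel β γ) [IsSFiniteKernel η] {f : α → β → γ → ℝ≥0∞}
    (hf : Measurable fun p : α × β × γ => f p.1 p.2.1 p.2.2) :
    ∫⁻ a, ∫⁻ b, ∫⁻ c, f a b c ∂η b ∂m' ∂m = ∫⁻ b, ∫⁻ c, ∫⁻ a, f a b c ∂m ∂η b ∂m' := by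
  rw [lintegral_lintegral_swap (Measurable.aemeasurable (by fun_prop))]
  exact lintegral_congr fun b => lintegral_lintegral_swap (by fun_prop)

def IsTimeReversal {Y : Type*} [MeasurableSpace Y] (P P' : Measure Y) (T Q : Kernel Y Y) : Prop :=
  ∀ f : Y → Y → ℝ≥0∞, Measurable (Function.uncurry f) →
    ∫⁻ μ, ∫⁻ η, f η μ ∂(T μ) ∂P = ∫⁻ η, ∫⁻ μ, f η μ ∂(Q η) ∂P'

lemma IsTimeReversal.lintegral_reroot {Y : Type*} [MeasurableSpace Y] {P P' : Measure Y}
    {T Q : Kernel Y Y} [IsSFiniteKernel T] [IsSFiniteKernel Q] (h : IsTimeReversal P P' T Q)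
    {F : Y → Y → Y → Y → ℝ≥0∞}
    (hF : Measurable fun p : Y × Y × Y × Y => F p.1 p.2.1 p.2.2.1 p.2.2.2) :
    ∫⁻ κ, ∫⁻ μ, ∫⁻ l, ∫⁻ ν, F κ μ l ν ∂(Q l) ∂(T μ) ∂(Q κ) ∂P'
      = ∫⁻ l, ∫⁻ μ, ∫⁻ ν, ∫⁻ κ, F κ μ l ν ∂(T μ) ∂(Q l) ∂(Q l) ∂P' := by
  calc ∫⁻ κ, ∫⁻ μ, ∫⁻ l, ∫⁻ ν, F κ μ l ν ∂(Q l) ∂(T μ) ∂(Q κ) ∂P'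
      = ∫⁻ μ, ∫⁻ κ, ∫⁻ l, ∫⁻ ν, F κ μ l ν ∂(Q l) ∂(T μ) ∂(T μ) ∂P :=
        (h _ (by fun_prop)).symm
    _ = ∫⁻ μ, ∫⁻ l, ∫⁻ ν, ∫⁻ κ, F κ μ l ν ∂(T μ) ∂(Q l) ∂(T μ) ∂P :=
        lintegral_congr fun μ => lintegral_lintegral_kernel_swap (T μ) (T μ) Q (by fun_prop)
    _ = ∫⁻ l, ∫⁻ μ, ∫⁻ ν, ∫⁻ κ, F κ μ l ν ∂(T μ) ∂(Q l) ∂(Q l) ∂P' :=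
        h _ (by fun_prop)

theorem stmt17_general {Y : Type*} [MeasurableSpace Y] [StandardBorelSpace Y]
    (P P' : Measure Y)
    (T Q : Kernel Y Y) [IsMarkovKernel T] [IsMarkovKernel Q]
    (hdis : ∀ f : Y → Y → ℝ≥0∞, Measurable (Function.uncurry f) →
      ∫⁻ μ, ∫⁻ η, f η μ ∂(T μ) ∂P = ∫⁻ η, ∫⁻ μ, f η μ ∂(Q η) ∂P')
    (g : Y → Y → Y → Y → ℝ≥0∞)
    (hg : Measurable fun p : Y × Y × Y × Y => g p.1 p.2.1 p.2.2.1 p.2.2.2) :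
    ∫⁻ κ, ∫⁻ μ, ∫⁻ l, ∫⁻ ν, g κ μ l ν * T ν {κ} ∂(Q l) ∂(T μ) ∂(Q κ) ∂P'
      = ∫⁻ κ, ∫⁻ ν, ∫⁻ l, ∫⁻ μ, g κ μ l ν * T μ {κ} ∂(Q l) ∂(T ν) ∂(Q κ) ∂P' := by
  have hrev : IsTimeReversal P P' T Q := hdis
  have hT := T.measurable_measure_singleton
  have hG : Measurable fun p : Y × Y × Y × Y => g p.1 p.2.1 p.2.2.1 p.2.2.2 * T p.2.2.2 {p.1} :=
    hg.mul (hT.comp (measurable_snd.snd.snd.prodMk measurable_fst))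
  have hG' : Measurable fun p : Y × Y × Y × Y => g p.1 p.2.2.2 p.2.2.1 p.2.1 * T p.2.2.2 {p.1} :=
    (by fun_prop : Measurable fun p : Y × Y × Y × Y => g p.1 p.2.2.2 p.2.2.1 p.2.1).mul
      (hT.comp (measurable_snd.snd.snd.prodMk measurable_fst))
  calc ∫⁻ κ, ∫⁻ μ, ∫⁻ l, ∫⁻ ν, g κ μ l ν * T ν {κ} ∂(Q l) ∂(T μ) ∂(Q κ) ∂P'
      = ∫⁻ l, ∫⁻ μ, ∫⁻ ν, ∫⁻ κ, g κ μ l ν * T ν {κ} ∂(T μ) ∂(Q l) ∂(Q l) ∂P' :=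
        hrev.lintegral_reroot hG
    _ = ∫⁻ l, ∫⁻ ν, ∫⁻ μ, ∫⁻ κ, g κ μ l ν * T μ {κ} ∂(T ν) ∂(Q l) ∂(Q l) ∂P' :=
        lintegral_congr fun l => lintegral_lintegral_kernel_mul_singleton_comm (Q l) T
          (by fun_prop)
    _ = ∫⁻ κ, ∫⁻ ν, ∫⁻ l, ∫⁻ μ, g κ μ l ν * T μ {κ} ∂(Q l) ∂(T ν) ∂(Q κ) ∂P' :=
        (hrev.lintegral_reroot hG').symm

/-- Alternating cycle condition for kernels on a standard Borel space:
let `P` be a probability measure on `Y`, `T` a Markov kernel, `P'` the image of `P` under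
`T`, and `Q` a Markov kernel satisfying the disintegration property
`∫∫ f(η,μ) T_μ(dη) P(dμ) = ∫∫ f(η,μ) Q_η(dμ) P'(dη)`. Then for every measurable
`g : Y⁴ → [0,∞]`,
`∫∫∫∫ g(κ,μ,λ,ν) T_ν({κ}) Q_λ(dν) T_μ(dλ) Q_κ(dμ) P'(dκ)
  = ∫∫∫∫ g(κ,μ,λ,ν) T_μ({κ}) Q_λ(dμ) T_ν(dλ) Q_κ(dν) P'(dκ)`. -/
theorem stmt17 {Y : Type*} [MeasurableSpace Y] [StandardBorelSpace Y]
    (P P' : Measure Y) [IsProbabilityMeasure P]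
    (T Q : Kernel Y Y) [IsMarkovKernel T] [IsMarkovKernel Q]
    (hP' : ∀ A : Set Y, MeasurableSet A → P' A = ∫⁻ μ, T μ A ∂P)
    (hdis : ∀ f : Y → Y → ℝ≥0∞, Measurable (Function.uncurry f) →
      ∫⁻ μ, ∫⁻ η, f η μ ∂(T μ) ∂P = ∫⁻ η, ∫⁻ μ, f η μ ∂(Q η) ∂P')
    (g : Y → Y → Y → Y → ℝ≥0∞)
    (hg : Measurable fun p : Y × Y × Y × Y => g p.1 p.2.1 p.2.2.1 p.2.2.2) :
    ∫⁻ κ, ∫⁻ μ, ∫⁻ l, ∫⁻ ν, g κ μ l ν * T ν {κ} ∂(Q l) ∂(T μ) ∂(Q κ) ∂P'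
      = ∫⁻ κ, ∫⁻ ν, ∫⁻ l, ∫⁻ μ, g κ μ l ν * T μ {κ} ∂(Q l) ∂(T ν) ∂(Q κ) ∂P' :=
  stmt17_general P P' T Q hdis g hg
end
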